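/- arXiv:1512.06778 — 5 statements merged into one kernel-verified Lean document; each statement's English description precedes it below -/
import Mathlib

section
/- Let R be a Noetherian local ring with maximal ideal 𝔪 and let (h₁,…,h_k) be a regular sequence of elements of 𝔪 such that the ideal (h₁,…,h_k) generated by the sequence is a radical ideal. Then the ideal (h₁,…,h_{k-1}) generated by the truncated sequence is also a radical ideal. -/
/-!
Write `J` for the ideal of the truncated sequence and `a` for the last element, so that `a` is a
non-zero-divisor modulo `J` and `J + (a)` is radical. If `x ^ n ∈ J` and `x ≡ a ^ m c (mod J)`,
then `a ^ (m n) c ^ n ∈ J`, so `c ^ n ∈ J`; hence `c ∈ J + (a)` and `x ∈ J + (a ^ (m + 1))`.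
Thus the image of `x` in `R ⧸ J` lies in `⋂ₘ (a) ^ m (R ⧸ J)`, which vanishes by Krull's
intersection theorem.
-/

/-- A sequence `h : Fin k → R` is a regular sequence if each `h i` is a non zero divisor
on `R` modulo the ideal generated by the previous elements, and the ideal generated by
the whole sequence is proper. -/
def IsRegSeq {R : Type*} [CommRing R] {k : ℕ} (h : Fin k → R) : Prop :=
  (∀ i : Fin k, ∀ a : R,
      h i * a ∈ Ideal.span (h '' {j : Fin k | j < i}) →
        a ∈ Ideal.span (h '' {j : Fin k | j < i})) ∧
  Ideal.span (Set.range h) ≠ ⊤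

namespace Ideal

variable {R : Type*} [CommRing R] {J : Ideal R} {a x : R}

theorem mem_of_pow_mul_mem (hreg : ∀ y, a * y ∈ J → y ∈ J) (n : ℕ) (hx : a ^ n * x ∈ J) :
    x ∈ J := by
  induction n with
  | zero => simpa using hx
  | succ n ih => exact ih (hreg _ (by rwa [← mul_assoc, ← pow_succ']))

theorem exists_sub_pow_mul_mem_of_mem_radical (hreg : ∀ y, a * y ∈ J → y ∈ J)
    (hrad : (J ⊔ span {a}).IsRadical) (hx : x ∈ J.radical) (m : ℕ) :
    ∃ c, x - a ^ m * c ∈ J := by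
  obtain ⟨n, hxn⟩ := hx
  induction m with
  | zero => exact ⟨x, by simp⟩
  | succ m ih =>
    obtain ⟨c, hc⟩ := ih
    have hcn : c ^ n ∈ J := by
      refine mem_of_pow_mul_mem hreg (m * n) ?_
      have hdiff : x ^ n - (a ^ m * c) ^ n ∈ J := J.mem_of_dvd (sub_dvd_pow_sub_pow _ _ n) hc
      simpa [mul_pow, ← pow_mul] using J.sub_mem hxn hdiff
    obtain ⟨b, j, hj, rfl⟩ :=
      mem_span_singleton_sup.mp (sup_comm J _ ▸ hrad ⟨n, mem_sup_left hcn⟩)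
    refine ⟨b, ?_⟩
    have hsplit : x - a ^ (m + 1) * b = (x - a ^ m * (b * a + j)) + a ^ m * j := by ring
    rw [hsplit]
    exact J.add_mem hc (J.mul_mem_left _ hj)

theorem mem_of_forall_exists_sub_pow_mul_mem [IsNoetherianRing R] (ha : a ∈ jacobson ⊥)
    (hx : ∀ m : ℕ, ∃ c, x - a ^ m * c ∈ J) : x ∈ J := by
  have hkrull := (span {a}).iInf_pow_smul_eq_bot_of_le_jacobson (M := R ⧸ J)
    ((span_singleton_le_iff_mem _).mpr ha)
  rw [← Quotient.eq_zero_iff_mem, ← Submodule.mem_bot R, ← hkrull, Submodule.mem_iInf]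
  intro m
  obtain ⟨c, hc⟩ := hx m
  rw [show Quotient.mk J x = a ^ m • Quotient.mk J c from Quotient.eq.mpr hc]
  exact Submodule.smul_mem_smul (pow_mem_pow (mem_span_singleton_self a) m) Submodule.mem_top

theorem IsRadical.of_sup_span_singleton [IsNoetherianRing R] (ha : a ∈ jacobson ⊥)
    (hreg : ∀ y, a * y ∈ J → y ∈ J) (hrad : (J ⊔ span {a}).IsRadical) : J.IsRadical :=
  fun _ hx ↦ mem_of_forall_exists_sub_pow_mul_mem ha
    (exists_sub_pow_mul_mem_of_mem_radical hreg hrad hx)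

theorem span_range_eq_span_range_castSucc_sup {k : ℕ} (h : Fin (k + 1) → R) :
    span (Set.range h) = span (Set.range (h ∘ Fin.castSucc)) ⊔ span {h (Fin.last k)} := by
  conv_lhs => rw [← Fin.snoc_init_self h, Fin.range_snoc, span_insert, sup_comm]
  rfl

end Ideal

theorem IsRegSeq.mem_of_last_mul_mem {R : Type*} [CommRing R] {k : ℕ} {h : Fin (k + 1) → R}
    (hreg : IsRegSeq h) {y : R}
    (hy : h (Fin.last k) * y ∈ Ideal.span (Set.range (h ∘ Fin.castSucc))) :
    y ∈ Ideal.span (Set.range (h ∘ Fin.castSucc)) := by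
  have hprev : h '' {j | j < Fin.last k} = Set.range (h ∘ Fin.castSucc) := by
    rw [Set.range_comp, Fin.range_castSucc]
    rfl
  rw [← hprev] at hy ⊢
  exact hreg.1 (Fin.last k) y hy

/-- Let `R` be a Noetherian local ring and `(h₁, …, h_k)` a regular sequence of elements of
the maximal ideal generating a radical ideal.  Then the ideal generated by the truncated
sequence `(h₁, …, h_{k-1})` is also radical. -/
theorem stmt0 {R : Type*} [CommRing R] [IsNoetherianRing R] [IsLocalRing R]
    {k : ℕ} (h : Fin (k + 1) → R)
    (hmem : ∀ i, h i ∈ IsLocalRing.maximalIdeal R)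
    (hreg : IsRegSeq h)
    (hrad : (Ideal.span (Set.range h)).IsRadical) :
    (Ideal.span (Set.range (h ∘ Fin.castSucc))).IsRadical :=
  Ideal.IsRadical.of_sup_span_singleton
    (IsLocalRing.maximalIdeal_le_jacobson _ (hmem (Fin.last k)))
    (fun _ ↦ hreg.mem_of_last_mul_mem)
    (Ideal.span_range_eq_span_range_castSucc_sup h ▸ hrad)
end

section
/- Let R be a Noetherian local ring and (h₁,…,h_k) a regular sequence in R. Let p = (p₁,…,p_k) and n = (n₁,…,n_k) be tuples of natural numbers with p_i ≥ n_i ≥ 1 for all i, and let a ∈ R. If h₁^{p₁−n₁}⋯h_k^{p_k−n_k}·a belongs to the ideal (h₁^{p₁},…,h_k^{p_k}), then a belongs to the ideal (h₁^{n₁},…,h_k^{n_k}). -/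
/-!
In a Noetherian local ring a regular sequence stays regular after any permutation, so each
`h j` is a nonzerodivisor modulo the ideal generated by the other `h i`. This survives raising
the other generators to arbitrary powers: if `x` is regular modulo `J` and `y` is regular modulo
`J + (x)`, then `y` is regular modulo `J + (xᵉ)`, by induction on `e`. Finally, if `x` is
regular modulo `J`, then `xᵉ b ∈ J + (x^q)` forces `b ∈ J + (x^(q - e))`; applying this with
`x = h j` to one index at a time strips the factors `h i ^ (p i - n i)` off.
-/

open Ideal RingTheory.Sequence

section NonZeroDivisorModulo

variable {R : Type*} [CommRing R] {J : Ideal R} {x y : R}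

theorem mem_sup_span_pow_sub_of_pow_mul_mem (hx : IsSMulRegular (R ⧸ J) x) {e q : ℕ}
    (heq : e ≤ q) {b : R} (hb : x ^ e * b ∈ J ⊔ span {x ^ q}) :
    b ∈ J ⊔ span {x ^ (q - e)} := by
  obtain ⟨w, hw, _, hv, hwv⟩ := Submodule.mem_sup.mp hb
  obtain ⟨c, rfl⟩ := mem_span_singleton'.mp hv
  have hJ : b - c * x ^ (q - e) ∈ J := by
    refine mem_of_isSMulRegular_quotient_of_smul_mem (hx.pow e) ?_
    have : x ^ e • (b - c * x ^ (q - e)) = w := by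
      rw [smul_eq_mul]
      linear_combination -hwv - c * pow_mul_pow_sub x heq
    rwa [this]
  rw [← sub_add_cancel b (c * x ^ (q - e))]
  exact Submodule.add_mem_sup hJ (mem_span_singleton'.mpr ⟨c, rfl⟩)

theorem IsSMulRegular.quotient_sup_span_pow (hx : IsSMulRegular (R ⧸ J) x)
    (hy : IsSMulRegular (R ⧸ (J ⊔ span {x})) y) (e : ℕ) :
    IsSMulRegular (R ⧸ (J ⊔ span {x ^ e})) y := by
  rw [isSMulRegular_quotient_iff_mem_of_smul_mem] at hy ⊢
  induction e with
  | zero => simp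
  | succ e ih =>
    intro a ha
    have hle : J ⊔ span {x ^ (e + 1)} ≤ J ⊔ span {x ^ e} :=
      sup_le_sup_left (span_singleton_le_span_singleton.mpr (pow_dvd_pow x e.le_succ)) J
    obtain ⟨u, hu, _, hv, rfl⟩ := Submodule.mem_sup.mp (ih a (hle ha))
    obtain ⟨d, rfl⟩ := mem_span_singleton'.mp hv
    have hyd : x ^ e * (y * d) ∈ J ⊔ span {x ^ (e + 1)} := by
      have : x ^ e * (y * d) = y • (u + d * x ^ e) - y * u := by rw [smul_eq_mul]; ring
      rw [this]
      exact sub_mem ha (Submodule.mem_sup_left (J.mul_mem_left y hu))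
    have hd := hy d (by simpa using mem_sup_span_pow_sub_of_pow_mul_mem hx e.le_succ hyd)
    obtain ⟨u', hu', _, hv', rfl⟩ := Submodule.mem_sup.mp hd
    obtain ⟨f, rfl⟩ := mem_span_singleton'.mp hv'
    have : u + (u' + f * x) * x ^ e = (u + x ^ e * u') + f * x ^ (e + 1) := by ring
    rw [this]
    exact Submodule.add_mem_sup (add_mem hu (J.mul_mem_left _ hu'))
      (mem_span_singleton'.mpr ⟨f, rfl⟩)

end NonZeroDivisorModulo

namespace IsRegSeq

variable {R : Type*} [CommRing R] {k : ℕ} {h : Fin k → R}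

theorem isWeaklyRegular (hreg : IsRegSeq h) : IsWeaklyRegular R ((List.finRange k).map h) := by
  refine ⟨fun i hi => ?_⟩
  rw [List.length_map, List.length_finRange] at hi
  have hprev : ofList (((List.finRange k).map h).take i) = span (h '' {j | j < ⟨i, hi⟩}) := by
    refine congrArg span (Set.ext fun r => ?_)
    simp only [List.mem_take_iff_getElem, List.getElem_map, List.getElem_finRange, Fin.cast_mk,
      List.length_map, List.length_finRange, lt_inf_iff, Set.mem_ofPred_eq, Fin.lt_def,
      Set.mem_image]
    exact ⟨fun ⟨j, hj, hr⟩ => ⟨⟨j, hj.2⟩, hj.1, hr⟩, fun ⟨j, hj, hr⟩ => ⟨j, ⟨hj, j.2⟩, hr⟩⟩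
  rw [smul_eq_mul, mul_top, hprev, isSMulRegular_quotient_iff_mem_of_smul_mem]
  simpa using hreg.1 ⟨i, hi⟩

theorem mem_maximalIdeal [IsLocalRing R] (hreg : IsRegSeq h) (i : Fin k) :
    h i ∈ IsLocalRing.maximalIdeal R :=
  IsLocalRing.le_maximalIdeal hreg.2 (subset_span ⟨i, rfl⟩)

theorem isSMulRegular_quotient_span_image [IsNoetherianRing R] [IsLocalRing R]
    (hreg : IsRegSeq h) {T : Finset (Fin k)} {j : Fin k} (hj : j ∉ T) :
    IsSMulRegular (R ⧸ span (h '' T)) (h j) := by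
  classical
  set l₀ := (List.finRange k).filter (· ∈ T)
  set l₁ := (List.finRange k).filter (fun i => !decide (i ∈ T))
  have hperm : ((List.finRange k).map h).Perm ((l₀.map h ++ [h j]) ++ (l₁.erase j).map h) := by
    have hj₁ : j ∈ l₁ := by simpa [l₁] using hj
    simpa using ((List.filter_append_perm (· ∈ T) _).symm.trans
      (List.Perm.append_left l₀ (List.perm_cons_erase hj₁))).map h
  have hwr := IsLocalRing.isWeaklyRegular_of_perm_of_subset_maximalIdeal hreg.isWeaklyRegular
    hperm (by simpa using hreg.mem_maximalIdeal)
  rw [isWeaklyRegular_append_iff, isWeaklyRegular_append_iff,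
    isWeaklyRegular_singleton_iff, smul_eq_mul, mul_top] at hwr
  have hl₀ : ofList (l₀.map h) = span (h '' T) :=
    congrArg span (Set.ext fun r => by simp [l₀])
  exact hl₀ ▸ hwr.1.2

theorem isSMulRegular_quotient_span_pow_image_sup [IsNoetherianRing R] [IsLocalRing R]
    (hreg : IsRegSeq h) (m : Fin k → ℕ) {u T : Finset (Fin k)} (huT : Disjoint u T)
    {j : Fin k} (hju : j ∉ u) (hjT : j ∉ T) :
    IsSMulRegular (R ⧸ (span ((fun i => h i ^ m i) '' u) ⊔ span (h '' T))) (h j) := by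
  classical
  induction u using Finset.induction_on generalizing T j with
  | empty =>
    rw [Finset.coe_empty, Set.image_empty, span_empty, bot_sup_eq]
    exact hreg.isSMulRegular_quotient_span_image hjT
  | insert t u htu ih =>
    rw [Finset.disjoint_insert_left] at huT
    rw [Finset.mem_insert, not_or] at hju
    have hx := ih huT.2 htu huT.1
    have hy := ih (T := insert t T) (Finset.disjoint_insert_right.mpr ⟨htu, huT.2⟩) hju.2
      (by simp [hju.1, hjT])
    rw [Finset.coe_insert, Set.image_insert_eq, span_insert] at hy ⊢
    rw [← sup_assoc, sup_right_comm] at hy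
    rw [sup_comm (span {_}), sup_right_comm]
    exact hx.quotient_sup_span_pow hy (m t)

theorem mem_span_range_pow_update_of_pow_mul_mem [IsNoetherianRing R] [IsLocalRing R]
    (hreg : IsRegSeq h) (q : Fin k → ℕ) (j : Fin k) {e : ℕ} (he : e ≤ q j) {b : R}
    (hb : h j ^ e * b ∈ span (Set.range fun i => h i ^ q i)) :
    b ∈ span (Set.range fun i => h i ^ Function.update q j (q j - e) i) := by
  have hj := hreg.isSMulRegular_quotient_span_pow_image_sup q (u := {j}ᶜ) (T := ∅)
    (Finset.disjoint_empty_right _) (by simp) (Finset.notMem_empty j)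
  rw [Finset.coe_empty, Set.image_empty, span_empty, sup_bot_eq, Finset.coe_compl,
    Finset.coe_singleton] at hj
  have himage : (fun i => h i ^ Function.update q j (q j - e) i) '' {j}ᶜ =
      (fun i => h i ^ q i) '' {j}ᶜ :=
    Set.image_congr fun i hi => by rw [Function.update_of_ne hi]
  rw [← Set.insert_image_compl_eq_range, span_insert, sup_comm] at hb ⊢
  rw [himage, Function.update_self]
  exact mem_sup_span_pow_sub_of_pow_mul_mem hj he hb

end IsRegSeq

theorem stmt2_general {R : Type*} [CommRing R] [IsNoetherianRing R] [IsLocalRing R]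
    {k : ℕ} (h : Fin k → R) (hreg : IsRegSeq h)
    (p n : Fin k → ℕ) (hpn : ∀ i, n i ≤ p i) (a : R)
    (ha : (∏ i, h i ^ (p i - n i)) * a ∈ Ideal.span (Set.range fun i => h i ^ p i)) :
    a ∈ Ideal.span (Set.range fun i => h i ^ n i) := by
  classical
  suffices key : ∀ (s : Finset (Fin k)) (b : R),
      (∏ i ∈ s, h i ^ (p i - n i)) * b ∈ span (Set.range fun i => h i ^ p i) →
        b ∈ span (Set.range fun i => h i ^ s.piecewise n p i) by
    simpa using key Finset.univ a ha
  intro s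
  induction s using Finset.induction_on with
  | empty => simp
  | insert j s hjs ih =>
    intro b hb
    rw [Finset.prod_insert hjs, mul_comm (h j ^ _), mul_assoc] at hb
    have hq : s.piecewise n p j = p j := Finset.piecewise_eq_of_notMem _ _ _ hjs
    have := hreg.mem_span_range_pow_update_of_pow_mul_mem _ j (hq ▸ Nat.sub_le _ _) (ih _ hb)
    rwa [hq, Nat.sub_sub_self (hpn j), ← Finset.piecewise_insert] at this

/-- Let `R` be a Noetherian local ring and `(h₁, …, h_k)` a regular sequence in `R`.
Let `p = (p₁, …, p_k)` and `n = (n₁, …, n_k)` be tuples of natural numbers with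
`p_i ≥ n_i ≥ 1` for all `i`, and let `a ∈ R`.  If `h₁^{p₁-n₁} ⋯ h_k^{p_k-n_k} · a` belongs
to the ideal `(h₁^{p₁}, …, h_k^{p_k})`, then `a` belongs to `(h₁^{n₁}, …, h_k^{n_k})`. -/
theorem stmt2 {R : Type*} [CommRing R] [IsNoetherianRing R] [IsLocalRing R]
    {k : ℕ} (h : Fin k → R) (hreg : IsRegSeq h)
    (p n : Fin k → ℕ) (hn : ∀ i, 1 ≤ n i) (hpn : ∀ i, n i ≤ p i) (a : R)
    (ha : (∏ i, h i ^ (p i - n i)) * a ∈ Ideal.span (Set.range fun i => h i ^ p i)) :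
    a ∈ Ideal.span (Set.range fun i => h i ^ n i) :=
  stmt2_general h hreg p n hpn a ha
end

section
/- Let R be a Noetherian local ring, (h₁,h₂) a regular sequence in R, and M a free R-module. If m₁, m₂, m₃ ∈ M satisfy h₂²·m₁ + h₁²·m₂ = h₁h₂·m₃, then m₁ ∈ h₁·M and m₂ ∈ h₂·M. -/
/-!
Working in coordinates of a basis reduces the claim to `R`. There, `h₂² a = h₁ (h₂ c - h₁ b)`,
so `h₁ ∣ h₂² a` and `h₁ ∣ a` since `h₂` is regular modulo `h₁`; symmetrically `h₂ ∣ b`, because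
`h₁` is regular and `h₂` regular modulo `h₁` force `h₁` to be regular modulo `h₂`.
-/

section
variable {R : Type*} [CommRing R]

theorem dvd_of_dvd_pow_mul {a b : R} (hab : ∀ x, a ∣ b * x → a ∣ x) (n : ℕ) {x : R}
    (h : a ∣ b ^ n * x) : a ∣ x := by
  induction n with
  | zero => simpa using h
  | succ n ih => exact ih (hab _ (by rwa [pow_succ', mul_assoc] at h))

theorem dvd_of_dvd_mul_swap {a b : R} (ha : IsSMulRegular R a)
    (hab : ∀ x, a ∣ b * x → a ∣ x) {y : R} (h : b ∣ a * y) : b ∣ y := by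
  obtain ⟨w, hw⟩ := h
  obtain ⟨z, rfl⟩ := hab w ⟨y, by rw [← hw, mul_comm]⟩
  exact ⟨z, ha (by simp only [smul_eq_mul]; rw [hw]; ring)⟩

namespace IsRegSeq
variable {a b : R}

theorem isSMulRegular_fst (h : IsRegSeq ![a, b]) : IsSMulRegular R a := by
  rw [isSMulRegular_iff_right_eq_zero_of_smul]
  intro x hx
  simpa using h.1 0 x (by simpa using hx)

theorem dvd_of_dvd_mul_snd (h : IsRegSeq ![a, b]) {x : R} (hx : a ∣ b * x) : a ∣ x := by
  have hlt : ![a, b] '' {j : Fin 2 | j < 1} = {a} := by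
    ext; simp [Fin.lt_one_iff]
  simpa [hlt, Ideal.mem_span_singleton] using h.1 1 x (by simpa [hlt, Ideal.mem_span_singleton])

end IsRegSeq
end

theorem Module.Basis.exists_eq_smul_of_forall_dvd_repr {R M ι : Type*} [CommSemiring R]
    [AddCommMonoid M] [Module R M] (b : Module.Basis ι R M) {a : R} {m : M}
    (h : ∀ i, a ∣ b.repr m i) : ∃ u, m = a • u := by
  choose t ht using h
  refine ⟨(b.repr m).sum fun i _ => t i • b i, ?_⟩
  rw [Finsupp.smul_sum]
  conv_lhs => rw [← b.linearCombination_repr m, Finsupp.linearCombination_apply]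
  exact Finsupp.sum_congr fun i _ => by rw [smul_smul, ← ht i]

theorem stmt11_general {R : Type*} [CommRing R]
    (h₁ h₂ : R) (hreg : IsRegSeq ![h₁, h₂])
    (M : Type*) [AddCommGroup M] [Module R M] [Module.Free R M]
    (m₁ m₂ m₃ : M) (hrel : h₂ ^ 2 • m₁ + h₁ ^ 2 • m₂ = (h₁ * h₂) • m₃) :
    (∃ u : M, m₁ = h₁ • u) ∧ (∃ v : M, m₂ = h₂ • v) := by
  obtain ⟨ι, b⟩ := Module.Free.exists_basis (R := R) (M := M)
  have hcoord (i : ι) :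
      h₂ ^ 2 * b.repr m₁ i + h₁ ^ 2 * b.repr m₂ i = h₁ * h₂ * b.repr m₃ i := by
    simpa using congr(b.repr $hrel i)
  have h₂_reg_mod_h₁ : ∀ x, h₁ ∣ h₂ * x → h₁ ∣ x := fun _ => hreg.dvd_of_dvd_mul_snd
  have h₁_reg_mod_h₂ : ∀ x, h₂ ∣ h₁ * x → h₂ ∣ x :=
    fun _ => dvd_of_dvd_mul_swap hreg.isSMulRegular_fst h₂_reg_mod_h₁
  refine ⟨b.exists_eq_smul_of_forall_dvd_repr fun i => dvd_of_dvd_pow_mul h₂_reg_mod_h₁ 2 ?_,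
    b.exists_eq_smul_of_forall_dvd_repr fun i => dvd_of_dvd_pow_mul h₁_reg_mod_h₂ 2 ?_⟩
  · exact ⟨h₂ * b.repr m₃ i - h₁ * b.repr m₂ i, by linear_combination hcoord i⟩
  · exact ⟨h₁ * b.repr m₃ i - h₂ * b.repr m₁ i, by linear_combination hcoord i⟩

/-- Let `R` be a Noetherian local ring, `(h₁, h₂)` a regular sequence in `R`, and `M` a
free `R`-module.  If `m₁, m₂, m₃ ∈ M` satisfy `h₂² • m₁ + h₁² • m₂ = h₁h₂ • m₃`, then
`m₁ ∈ h₁ • M` and `m₂ ∈ h₂ • M`. -/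
theorem stmt11 {R : Type*} [CommRing R] [IsNoetherianRing R] [IsLocalRing R]
    (h₁ h₂ : R) (hreg : IsRegSeq ![h₁, h₂])
    (M : Type*) [AddCommGroup M] [Module R M] [Module.Free R M]
    (m₁ m₂ m₃ : M) (hrel : h₂ ^ 2 • m₁ + h₁ ^ 2 • m₂ = (h₁ * h₂) • m₃) :
    (∃ u : M, m₁ = h₁ • u) ∧ (∃ v : M, m₂ = h₂ • v) :=
  stmt11_general h₁ h₂ hreg M m₁ m₂ m₃ hrel
end

section
/- Let K be a commutative ring, m ≥ 2, and let h₁,…,h_{m−1} be polynomials in K[x₁,…,x_m]. Assume there are weights w₁,…,w_m ∈ K and degrees d₁,…,d_{m−1} ∈ K satisfying the Euler relations: for every ℓ ∈ {1,…,m−1}, Σ_{p=1}^m w_p·x_p·(∂h_ℓ/∂x_p) = d_ℓ·h_ℓ. For i ∈ {1,…,m}, let J_i denote the determinant of the (m−1)×(m−1) matrix obtained from the Jacobian matrix (∂h_ℓ/∂x_p)_{1≤ℓ≤m−1, 1≤p≤m} by deleting the i-th column. Then for all i, j ∈ {1,…,m}, the polynomial (−1)^{i−1}·w_i·x_i·J_j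 − (−1)^{j−1}·w_j·x_j·J_i belongs to the ideal (h₁,…,h_{m−1}) of K[x₁,…,x_m]. -/
open MvPolynomial Matrix

/-!
Prepend the row `e_k` to the `n × (n + 1)` matrix `A` to get a square matrix `M_k`; expanding
along that row, `det M_k = (-1)^k J_k`. Applying `adj M_j` to `M_j v = (v_j, A v)` gives
`det M_j · v_i = (adj M_j)_{i0} v_j + Σ_ℓ (adj M_j)_{i,ℓ+1} (A v)_ℓ`, and
`(adj M_j)_{i0} = det M_i`, so `det M_j · v_i - det M_i · v_j` lies in the ideal spanned by
the entries of `A v`. For the Jacobian matrix of `h` and `v = (w_p x_p)_p`, the Euler relations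
say `A v = (d_ℓ h_ℓ)_ℓ`.
-/

namespace Matrix

variable {R : Type*} [CommRing R] {n : ℕ}

theorem det_of_vecCons_single (A : Matrix (Fin n) (Fin (n + 1)) R) (k : Fin (n + 1)) :
    (of (vecCons (Pi.single k 1) A)).det = (-1) ^ (k : ℕ) * (A.submatrix id k.succAbove).det := by
  rw [det_succ_row_zero, Finset.sum_eq_single k (fun p _ hp => by simp [hp]) (by simp)]
  simp only [of_apply, cons_val, Pi.single_eq_same, mul_one]
  rfl

theorem adjugate_of_vecCons_single_apply_zero (A : Matrix (Fin n) (Fin (n + 1)) R)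
    (i k : Fin (n + 1)) :
    (of (vecCons (Pi.single k 1) A)).adjugate i 0 = (of (vecCons (Pi.single i 1) A)).det := by
  rw [adjugate_apply]
  congr 1
  ext a b
  refine Fin.cases ?_ (fun ℓ => ?_) a
  · rw [updateRow_self]; rfl
  · rw [updateRow_ne (Fin.succ_ne_zero ℓ)]; rfl

theorem det_mul_sub_det_mul_mem_span_mulVec (A : Matrix (Fin n) (Fin (n + 1)) R)
    (v : Fin (n + 1) → R) (i j : Fin (n + 1)) :
    (of (vecCons (Pi.single j 1) A)).det * v i - (of (vecCons (Pi.single i 1) A)).det * v j ∈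
      Ideal.span (Set.range (A *ᵥ v)) := by
  set M := of (vecCons (Pi.single j 1) A)
  have hMv : M *ᵥ v = vecCons (v j) (A *ᵥ v) :=
    (cons_mulVec (Pi.single j 1) A v).trans (by rw [single_one_dotProduct]; rfl)
  have hi : M.adjugate i 0 * v j + ∑ ℓ : Fin n, M.adjugate i ℓ.succ * (A *ᵥ v) ℓ =
      M.det * v i := by
    have := congrFun (congrArg (M.adjugate *ᵥ ·) hMv) i
    rwa [mulVec_mulVec, adjugate_mul, smul_mulVec, one_mulVec, mulVec, dotProduct,
      Fin.sum_univ_succ, Pi.smul_apply, smul_eq_mul, eq_comm] at this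
  rw [← hi, adjugate_of_vecCons_single_apply_zero, add_sub_cancel_left]
  exact Ideal.sum_mem _ fun ℓ _ => Ideal.mul_mem_left _ _ (Ideal.subset_span ⟨ℓ, rfl⟩)

theorem neg_one_pow_mul_det_submatrix_succAbove_sub_mem_span_mulVec
    (A : Matrix (Fin n) (Fin (n + 1)) R) (v : Fin (n + 1) → R) (i j : Fin (n + 1)) :
    (-1) ^ (i : ℕ) * v i * (A.submatrix id j.succAbove).det -
        (-1) ^ (j : ℕ) * v j * (A.submatrix id i.succAbove).det ∈
      Ideal.span (Set.range (A *ᵥ v)) := by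
  have h := Ideal.mul_mem_left _ ((-1) ^ ((i : ℕ) + j))
    (det_mul_sub_det_mul_mem_span_mulVec A v i j)
  rw [det_of_vecCons_single, det_of_vecCons_single] at h
  convert h using 1
  have sq : ∀ k : ℕ, ((-1 : R) ^ k) ^ 2 = 1 := fun k => by
    rw [← pow_mul, pow_mul', neg_one_sq, one_pow]
  linear_combination (-1) ^ (j : ℕ) * v j * (A.submatrix id i.succAbove).det * sq i -
    (-1) ^ (i : ℕ) * v i * (A.submatrix id j.succAbove).det * sq j

end Matrix

theorem stmt12_general {K : Type*} [CommRing K] (n : ℕ)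
    (h : Fin n → MvPolynomial (Fin (n + 1)) K)
    (w : Fin (n + 1) → K) (d : Fin n → K)
    (euler : ∀ ℓ : Fin n,
      ∑ p : Fin (n + 1), C (w p) * X p * pderiv p (h ℓ) = C (d ℓ) * h ℓ)
    (J : Fin (n + 1) → MvPolynomial (Fin (n + 1)) K)
    (hJ : ∀ i : Fin (n + 1),
      J i = Matrix.det (Matrix.of fun ℓ p : Fin n => pderiv (i.succAbove p) (h ℓ)))
    (i j : Fin (n + 1)) :
    (-1 : MvPolynomial (Fin (n + 1)) K) ^ (i : ℕ) * C (w i) * X i * J j -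
        (-1 : MvPolynomial (Fin (n + 1)) K) ^ (j : ℕ) * C (w j) * X j * J i ∈
      Ideal.span (Set.range h) := by
  let jacobian : Matrix (Fin n) (Fin (n + 1)) (MvPolynomial (Fin (n + 1)) K) :=
    .of fun ℓ p => pderiv p (h ℓ)
  have jacobian_mulVec : jacobian *ᵥ (fun p => C (w p) * X p) = fun ℓ => C (d ℓ) * h ℓ :=
    funext fun ℓ => (Finset.sum_congr rfl fun p _ => mul_comm _ _).trans (euler ℓ)
  have span_le : Ideal.span (Set.range (jacobian *ᵥ fun p => C (w p) * X p)) ≤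
      Ideal.span (Set.range h) := by
    rw [jacobian_mulVec, Ideal.span_le]
    rintro _ ⟨ℓ, rfl⟩
    exact Ideal.mul_mem_left _ _ (Ideal.subset_span ⟨ℓ, rfl⟩)
  have key :=
    span_le (jacobian.neg_one_pow_mul_det_submatrix_succAbove_sub_mem_span_mulVec _ i j)
  rw [hJ i, hJ j]
  simp only [mul_assoc] at key ⊢
  exact key

/-- Let `K` be a commutative ring, `m = n + 1 ≥ 2`, and `h₁, …, h_{m-1}` polynomials in
`K[x₁, …, x_m]` satisfying the Euler relations `Σ_p w_p x_p ∂h_ℓ/∂x_p = d_ℓ h_ℓ` for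
weights `w_p ∈ K` and degrees `d_ℓ ∈ K`.  For `i ∈ {1, …, m}`, let `J i` be the
determinant of the `(m-1) × (m-1)` matrix obtained from the Jacobian matrix
`(∂h_ℓ/∂x_p)` by deleting the `i`-th column (the remaining columns being indexed via
`Fin.succAbove`).  Then for all `i, j`, the polynomial
`(-1)^{i-1} w_i x_i J_j - (-1)^{j-1} w_j x_j J_i` belongs to the ideal `(h₁, …, h_{m-1})`.
(Indices are `0`-based here, so the paper's sign `(-1)^{i-1}` reads `(-1)^{(i : ℕ)}`.) -/
theorem stmt12 {K : Type*} [CommRing K] (n : ℕ) (hn : 1 ≤ n)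
    (h : Fin n → MvPolynomial (Fin (n + 1)) K)
    (w : Fin (n + 1) → K) (d : Fin n → K)
    (euler : ∀ ℓ : Fin n,
      ∑ p : Fin (n + 1), C (w p) * X p * pderiv p (h ℓ) = C (d ℓ) * h ℓ)
    (J : Fin (n + 1) → MvPolynomial (Fin (n + 1)) K)
    (hJ : ∀ i : Fin (n + 1),
      J i = Matrix.det (Matrix.of fun ℓ p : Fin n => pderiv (i.succAbove p) (h ℓ)))
    (i j : Fin (n + 1)) :
    (-1 : MvPolynomial (Fin (n + 1)) K) ^ (i : ℕ) * C (w i) * X i * J j -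
        (-1 : MvPolynomial (Fin (n + 1)) K) ^ (j : ℕ) * C (w j) * X j * J i ∈
      Ideal.span (Set.range h) :=
  stmt12_general n h w d euler J hJ i j
end

section
/- Let R be a Noetherian local ring, (h₁,…,h_k) a regular sequence in R, and δ : R → R a derivation (an additive map satisfying the Leibniz rule δ(ab) = a·δ(b) + b·δ(a)). If δ(h₁·h₂⋯h_k) belongs to the principal ideal (h₁·h₂⋯h_k), then for every i ∈ {1,…,k}, δ(h_i) belongs to the principal ideal (h_i); in particular δ maps the ideal (h₁,…,h_k) into itself. -/
open RingTheory.Sequence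

lemma List.setOf_mem_take_ofFn {α : Type*} {k : ℕ} (f : Fin k → α) (i : Fin k) :
    {a | a ∈ (List.ofFn f).take i} = f '' {j | j < i} := by
  ext a
  simp only [List.mem_take_iff_getElem, List.getElem_ofFn, Set.mem_ofPred_eq, Set.mem_image]
  constructor
  · rintro ⟨j, hj, rfl⟩
    exact ⟨⟨j, by omega⟩, Fin.mk_lt_of_lt_val (by omega), rfl⟩
  · rintro ⟨j, hj, rfl⟩
    exact ⟨j, by simpa using hj, rfl⟩

lemma List.exists_perm_ofFn_cons_cons {α : Type*} {k : ℕ} (f : Fin k → α) {i j : Fin k}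
    (hij : i ≠ j) : ∃ rest, (List.ofFn f).Perm (f i :: f j :: rest) := by
  have hj : j ∈ (List.finRange k).erase i :=
    (List.mem_erase_of_ne hij.symm).2 (List.mem_finRange j)
  have hperm : (List.finRange k).Perm (i :: j :: ((List.finRange k).erase i).erase j) :=
    (List.perm_cons_erase (List.mem_finRange i)).trans ((List.perm_cons_erase hj).cons i)
  exact ⟨_, List.ofFn_eq_map ▸ hperm.map f⟩

section RegularSequence

variable {R : Type*} [CommRing R]

lemma Ideal.smul_top_eq_self (I : Ideal R) : I • (⊤ : Submodule R R) = I := by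
  rw [smul_eq_mul, Ideal.mul_top]

lemma IsRegSeq.isRegular_ofFn {k : ℕ} {h : Fin k → R} (hreg : IsRegSeq h) :
    IsRegular R (List.ofFn h) := by
  refine ⟨(isWeaklyRegular_iff_Fin R _).2 fun i => ?_, ?_⟩
  · rw [Ideal.smul_top_eq_self, isSMulRegular_quotient_iff_mem_of_smul_mem]
    have key := hreg.1 (i.cast List.length_ofFn)
    rw [← List.setOf_mem_take_ofFn] at key
    simp only [Fin.val_cast] at key
    simp only [Fin.getElem_fin, List.getElem_ofFn, smul_eq_mul]
    exact key
  · rw [Ideal.smul_top_eq_self, Ideal.ofList, ne_comm]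
    simpa only [List.mem_ofFn', Set.ofPred_mem_eq] using hreg.2

variable [IsNoetherianRing R] [IsLocalRing R]

lemma IsLocalRing.isSMulRegular_quotient_span_singleton_of_perm {rs rest : List R} {a b : R}
    (hrs : IsRegular R rs) (hperm : rs.Perm (a :: b :: rest)) :
    IsSMulRegular (R ⧸ Ideal.span {a}) b := by
  have := (IsLocalRing.isRegular_of_perm hrs hperm).regular_mod_prev 1 (by simp)
  rw [Ideal.smul_top_eq_self] at this
  exact Ideal.ofList_singleton a ▸ this

lemma IsRegSeq.isSMulRegular_quotient_span_singleton {k : ℕ} {h : Fin k → R}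
    (hreg : IsRegSeq h) {i j : Fin k} (hij : i ≠ j) :
    IsSMulRegular (R ⧸ Ideal.span {h i}) (h j) :=
  have ⟨_, hperm⟩ := List.exists_perm_ofFn_cons_cons h hij
  IsLocalRing.isSMulRegular_quotient_span_singleton_of_perm hreg.isRegular_ofFn hperm

lemma IsRegSeq.isSMulRegular_quotient_prod_erase {k : ℕ} {h : Fin k → R}
    (hreg : IsRegSeq h) (i : Fin k) :
    IsSMulRegular (R ⧸ Ideal.span {h i}) (∏ j ∈ Finset.univ.erase i, h j) :=
  Finset.prod_induction _ _ (fun _ _ => IsSMulRegular.mul) (IsSMulRegular.one _)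
    fun _ hj => hreg.isSMulRegular_quotient_span_singleton (Finset.ne_of_mem_erase hj).symm

end RegularSequence

section Derivation

variable {A R : Type*} [CommRing A] [CommRing R] [Algebra A R] (D : Derivation A R R)

lemma Derivation.apply_mem_span_singleton_of_mul {a b : R}
    (hb : IsSMulRegular (R ⧸ Ideal.span {a}) b) (hab : D (a * b) ∈ Ideal.span {a}) :
    D a ∈ Ideal.span {a} := by
  refine mem_of_isSMulRegular_quotient_of_smul_mem hb ?_
  have hleib : b • D a = D (a * b) - a * D b := by
    rw [D.leibniz, smul_eq_mul]; ring
  rw [hleib]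
  exact Ideal.sub_mem _ hab (Ideal.mul_mem_right _ _ (Ideal.mem_span_singleton_self a))

lemma Derivation.apply_mem_span_of_forall_mem {s : Set R} (hs : ∀ x ∈ s, D x ∈ Ideal.span s) :
    ∀ x ∈ Ideal.span s, D x ∈ Ideal.span s := by
  intro x hx
  induction hx using Submodule.span_induction with
  | mem x hx => exact hs x hx
  | zero => simp
  | add x y _ _ hx hy => rw [map_add]; exact add_mem hx hy
  | smul r x hx hDx =>
    rw [smul_eq_mul, D.leibniz, smul_eq_mul, smul_eq_mul]
    exact add_mem (Ideal.mul_mem_left _ r hDx) (Ideal.mul_mem_right _ _ hx)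

lemma IsRegSeq.derivation_apply_mem_span_singleton [IsNoetherianRing R] [IsLocalRing R]
    {k : ℕ} {h : Fin k → R} (hreg : IsRegSeq h) (hD : D (∏ i, h i) ∈ Ideal.span {∏ i, h i})
    (i : Fin k) : D (h i) ∈ Ideal.span {h i} := by
  have hprod : ∏ j, h j = h i * ∏ j ∈ Finset.univ.erase i, h j :=
    (Finset.mul_prod_erase _ _ (Finset.mem_univ i)).symm
  refine D.apply_mem_span_singleton_of_mul (hreg.isSMulRegular_quotient_prod_erase i) ?_
  rw [← hprod]
  refine Ideal.span_singleton_le_span_singleton.2 ?_ hD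
  exact hprod ▸ dvd_mul_right _ _

end Derivation

/-- Let `R` be a Noetherian local ring, `(h₁, …, h_k)` a regular sequence in `R`, and
`δ : R → R` a derivation (an additive map satisfying the Leibniz rule).  If
`δ(h₁ ⋯ h_k)` belongs to the principal ideal `(h₁ ⋯ h_k)`, then for every `i`,
`δ(h_i)` belongs to the principal ideal `(h_i)`; in particular `δ` maps the ideal
`(h₁, …, h_k)` into itself. -/
theorem stmt13 {R : Type*} [CommRing R] [IsNoetherianRing R] [IsLocalRing R]
    {k : ℕ} (h : Fin k → R) (hreg : IsRegSeq h)
    (δ : R → R)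
    (hadd : ∀ a b : R, δ (a + b) = δ a + δ b)
    (hleibniz : ∀ a b : R, δ (a * b) = a * δ b + b * δ a)
    (hprod : δ (∏ i, h i) ∈ Ideal.span {∏ i, h i}) :
    (∀ i, δ (h i) ∈ Ideal.span {h i}) ∧
      ∀ x ∈ Ideal.span (Set.range h), δ x ∈ Ideal.span (Set.range h) := by
  let D : Derivation ℤ R R := Derivation.mk' (AddMonoidHom.mk' δ hadd).toIntLinearMap hleibniz
  have hgen : ∀ i, D (h i) ∈ Ideal.span {h i} := hreg.derivation_apply_mem_span_singleton D hprod
  refine ⟨hgen, D.apply_mem_span_of_forall_mem ?_⟩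
  rintro _ ⟨i, rfl⟩
  exact Ideal.span_mono (Set.singleton_subset_iff.2 (Set.mem_range_self i)) (hgen i)
end
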